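/- Let k ∈ ℕ and let a, b, c, x be real numbers with (b)_i ≠ 0, (c)_i ≠ 0 and (c+1)_i ≠ 0 for all 0 ≤ i ≤ k. Define the terminating hypergeometric sum F(u; c') = Σ_{i=0}^{k} (−k)_i (a)_i (u)_i / ((b)_i (c')_i i!). Then x·F(−x+1; c+1) − (c+x)·F(−x; c+1) = −c·F(−x; c). -/
import Mathlib


/-- The Pochhammer symbol `(a)_i = a(a+1)⋯(a+i−1)`, with `(a)_0 = 1`. -/
noncomputable def poch (a : ℝ) (i : ℕ) : ℝ := ∏ j ∈ Finset.range i, (a + j)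

/-- The terminating hypergeometric sum
`F(u; c') = Σ_{i=0}^{k} (−k)_i (a)_i (u)_i / ((b)_i (c')_i i!)`,
i.e. the terminating series `₃F₂(−k, a, u; b, c'; 1)`. -/
noncomputable def hypF (k : ℕ) (a b : ℝ) (u c' : ℝ) : ℝ :=
  ∑ i ∈ Finset.range (k + 1),
    poch (-(k : ℝ)) i * poch a i * poch u i /
      (poch b i * poch c' i * (Nat.factorial i : ℝ))

lemma poch_succ (a : ℝ) (j : ℕ) : poch a (j + 1) = poch a j * (a + j) := by
  simp [poch, Finset.prod_range_succ]

lemma poch_succ' (a : ℝ) (j : ℕ) : poch a (j + 1) = a * poch (a + 1) j := by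
  simp only [poch, Finset.prod_range_succ']
  rw [mul_comm]
  congr 1
  · simp
  · apply Finset.prod_congr rfl
    intro m _
    push_cast
    ring

theorem stmt_7 (k : ℕ) (a b c x : ℝ)
    (hb : ∀ i ≤ k, poch b i ≠ 0)
    (hc : ∀ i ≤ k, poch c i ≠ 0)
    (hc1 : ∀ i ≤ k, poch (c + 1) i ≠ 0) :
    x * hypF k a b (-x + 1) (c + 1) - (c + x) * hypF k a b (-x) (c + 1)
      = -c * hypF k a b (-x) c := by
  simp only [hypF, Finset.mul_sum, ← Finset.sum_sub_distrib]
  apply Finset.sum_congr rfl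
  intro i hi
  simp only [Finset.mem_range, Nat.lt_succ_iff] at hi
  match i, hi with
  | 0, _ => simp [poch]
  | j + 1, hi =>
    have hjk : j ≤ k := Nat.le_of_succ_le hi
    have hk1 : 1 ≤ k := Nat.one_le_iff_ne_zero.mpr (by omega)
    have hcne : c ≠ 0 := by
      have := hc 1 hk1
      simpa [poch] using this
    have hbne : poch b (j + 1) ≠ 0 := hb _ hi
    have hc1j : poch (c + 1) j ≠ 0 := hc1 _ hjk
    have hc1j1 : poch (c + 1) (j + 1) ≠ 0 := hc1 _ hi
    have hcij : c + 1 + (j : ℝ) ≠ 0 := by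
      intro h
      apply hc1j1
      rw [poch_succ, h, mul_zero]
    have hfac : (Nat.factorial (j + 1) : ℝ) ≠ 0 := by
      exact_mod_cast Nat.factorial_ne_zero (j + 1)
    rw [poch_succ' (-x), poch_succ' c, poch_succ (c + 1), poch_succ (-x + 1)]
    field_simp
    ring
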